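/- arXiv:1609.06456 — 5 statements merged into one kernel-verified Lean document; each statement's English description precedes it below -/
import Mathlib

section
/- Let (A, B) be a pseudo-conditional pair with quotient matrix Q. Then (A, B) is legal if and only if the matrix Q has rank 1 and ∑_{s} (∑_{i} Q i s)⁻¹ = 1. -/
/-!
Since `Q i s = B s i / A i s`, the pair is legal with witnesses `(p, q)` exactly when
`p i = Q i s * q s`, i.e. `Q = p ⊗ q⁻¹` is a rank-one matrix whose column sums are `(q s)⁻¹`.
Conversely, the columns of a rank-one matrix are proportional, so dividing each column of `Q`
by its sum produces one and the same probability vector `p`, and `q s` is the reciprocal of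
the `s`-th column sum.
-/

namespace Matrix

variable {m n K : Type*} [Fintype n] [Field K]

theorem rank_eq_zero_iff {A : Matrix m n K} : A.rank = 0 ↔ A = 0 := by
  classical
  rw [rank, Submodule.finrank_eq_zero, LinearMap.range_eq_bot, ← toLin'_apply',
    LinearEquiv.map_eq_zero_iff]

theorem rank_vecMulVec_eq_one {u : m → K} {v : n → K} (hu : u ≠ 0) (hv : v ≠ 0) :
    (vecMulVec u v).rank = 1 := by
  refine le_antisymm (rank_vecMulVec_le u v) (Nat.one_le_iff_ne_zero.mpr fun h0 => ?_)
  obtain ⟨i, hi⟩ := Function.ne_iff.mp hu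
  obtain ⟨s, hs⟩ := Function.ne_iff.mp hv
  exact mul_ne_zero hi hs congr($(rank_eq_zero_iff.mp h0) i s)

theorem exists_eq_vecMulVec_of_rank_eq_one {A : Matrix m n K} (hA : A.rank = 1) :
    ∃ u v, A = vecMulVec u v := by
  rw [rank_eq_finrank_span_cols, finrank_eq_one_iff'] at hA
  obtain ⟨u, -, hu⟩ := hA
  choose v hv using fun s => hu ⟨A.col s, Submodule.subset_span ⟨s, rfl⟩⟩
  exact ⟨u, v, ext fun i s => by
    simpa [vecMulVec_apply, mul_comm, eq_comm] using congr($(hv s).val i)⟩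

theorem mul_sum_col_comm_of_rank_eq_one [Fintype m] {A : Matrix m n K} (hA : A.rank = 1)
    (i : m) (s t : n) : A i s * ∑ j, A j t = A i t * ∑ j, A j s := by
  obtain ⟨u, v, rfl⟩ := exists_eq_vecMulVec_of_rank_eq_one hA
  simp only [vecMulVec_apply, ← Finset.sum_mul]
  ring

end Matrix

open Matrix Finset

theorem legal_iff_rank_one_and_sum_inv_general
    (n S : ℕ) (hn : 0 < n) (hS : 0 < S)
    (A : Fin n → Fin S → ℝ) (B : Fin S → Fin n → ℝ)
    (hApos : ∀ i s, 0 < A i s) (hBpos : ∀ s i, 0 < B s i)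
    (Q : Matrix (Fin n) (Fin S) ℝ) (hQ : ∀ i s, Q i s = B s i / A i s) :
    (∃ (p : Fin n → ℝ) (q : Fin S → ℝ),
        (∀ i, 0 < p i) ∧ (∀ s, 0 < q s) ∧
        (∑ i, p i = 1) ∧ (∑ s, q s = 1) ∧
        (∀ i s, A i s * p i = B s i * q s)) ↔
      (Q.rank = 1 ∧ ∑ s, (∑ i, Q i s)⁻¹ = 1) := by
  have legal_iff {p : Fin n → ℝ} {q : Fin S → ℝ} (i s) :
      A i s * p i = B s i * q s ↔ p i = Q i s * q s := by
    rw [hQ, div_mul_eq_mul_div, eq_div_iff (hApos i s).ne', mul_comm, eq_comm]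
  constructor
  · rintro ⟨p, q, hp, hq, hp_sum, hq_sum, hpq⟩
    have hQ_eq : Q = vecMulVec p fun s => (q s)⁻¹ := ext fun i s => by
      rw [vecMulVec_apply, (legal_iff i s).mp (hpq i s), mul_inv_cancel_right₀ (hq s).ne']
    have hcol_sum (s) : ∑ i, Q i s = (q s)⁻¹ := by
      simp only [hQ_eq, vecMulVec_apply, ← sum_mul, hp_sum, one_mul]
    refine ⟨hQ_eq ▸ rank_vecMulVec_eq_one ?_ ?_, by simp only [hcol_sum, inv_inv, hq_sum]⟩
    · exact fun h => by simp [h] at hp_sum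
    · exact Function.ne_iff.mpr ⟨⟨0, hS⟩, (inv_pos.mpr (hq _)).ne'⟩
  · rintro ⟨hrank, hsum⟩
    have hQpos (i s) : 0 < Q i s := hQ i s ▸ div_pos (hBpos s i) (hApos i s)
    have hcol_pos (s) : 0 < ∑ i, Q i s :=
      sum_pos (fun i _ => hQpos i s) ⟨⟨0, hn⟩, mem_univ _⟩
    let s₀ : Fin S := ⟨0, hS⟩
    let p i := Q i s₀ * (∑ j, Q j s₀)⁻¹
    let q s := (∑ i, Q i s)⁻¹
    refine ⟨p, q, fun i => mul_pos (hQpos i s₀) (inv_pos.mpr (hcol_pos s₀)),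
      fun s => inv_pos.mpr (hcol_pos s), by rw [← sum_mul, mul_inv_cancel₀ (hcol_pos s₀).ne'],
      hsum, fun i s => (legal_iff i s).mpr ?_⟩
    have hcross := mul_sum_col_comm_of_rank_eq_one hrank i s₀ s
    simp only [p, q]
    field_simp [(hcol_pos s₀).ne', (hcol_pos s).ne']
    linear_combination hcross

/-- A pseudo-conditional pair `(A, B)` (entrywise positive, with
`∑ s, A i s = 1` for each `i` and `∑ i, B s i = 1` for each `s`) is legal
(i.e. there exist strictly positive probability vectors `p`, `q` with
`A i s * p i = B s i * q s` for all `i, s`) if and only if the quotient matrix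
`Q i s = B s i / A i s` has rank 1 and `∑ s, (∑ i, Q i s)⁻¹ = 1`. -/
theorem legal_iff_rank_one_and_sum_inv
    (n S : ℕ) (hn : 0 < n) (hS : 0 < S)
    (A : Fin n → Fin S → ℝ) (B : Fin S → Fin n → ℝ)
    (hApos : ∀ i s, 0 < A i s) (hBpos : ∀ s i, 0 < B s i)
    (hArow : ∀ i, ∑ s, A i s = 1) (hBrow : ∀ s, ∑ i, B s i = 1)
    (Q : Matrix (Fin n) (Fin S) ℝ) (hQ : ∀ i s, Q i s = B s i / A i s) :
    (∃ (p : Fin n → ℝ) (q : Fin S → ℝ),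
        (∀ i, 0 < p i) ∧ (∀ s, 0 < q s) ∧
        (∑ i, p i = 1) ∧ (∑ s, q s = 1) ∧
        (∀ i s, A i s * p i = B s i * q s)) ↔
      (Q.rank = 1 ∧ ∑ s, (∑ i, Q i s)⁻¹ = 1) :=
  legal_iff_rank_one_and_sum_inv_general n S hn hS A B hApos hBpos Q hQ
end

section
/- Let (A, B) be a pseudo-conditional pair with quotient matrix Q. If (A, B) is legal, then ∑_{s} (∑_{i} Q i s)⁻¹ = 1. -/
/-- If a pseudo-conditional pair `(A, B)` is legal, then its
quotient matrix `Q i s = B s i / A i s` satisfies `∑ s, (∑ i, Q i s)⁻¹ = 1`. -/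
theorem sum_inv_colsum_eq_one_of_legal
    (n S : ℕ) (hn : 0 < n) (hS : 0 < S)
    (A : Fin n → Fin S → ℝ) (B : Fin S → Fin n → ℝ)
    (hApos : ∀ i s, 0 < A i s) (hBpos : ∀ s i, 0 < B s i)
    (hArow : ∀ i, ∑ s, A i s = 1) (hBrow : ∀ s, ∑ i, B s i = 1)
    (Q : Matrix (Fin n) (Fin S) ℝ) (hQ : ∀ i s, Q i s = B s i / A i s)
    (hlegal : ∃ (p : Fin n → ℝ) (q : Fin S → ℝ),
        (∀ i, 0 < p i) ∧ (∀ s, 0 < q s) ∧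
        (∑ i, p i = 1) ∧ (∑ s, q s = 1) ∧
        (∀ i s, A i s * p i = B s i * q s)) :
    ∑ s, (∑ i, Q i s)⁻¹ = 1 := by
  obtain ⟨p, q, hp, hq, hps, hqs, hAB⟩ := hlegal
  have hQ' : ∀ i s, Q i s = p i / q s := by
    intro i s
    rw [hQ]
    rw [div_eq_div_iff (hApos i s).ne' (hq s).ne']
    linarith [hAB i s]
  calc ∑ s, (∑ i, Q i s)⁻¹ = ∑ s, q s := by
        refine Finset.sum_congr rfl fun s _ => ?_
        have : ∑ i, Q i s = (q s)⁻¹ := by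
          simp only [hQ', div_eq_mul_inv, ← Finset.sum_mul, hps, one_mul]
        rw [this, inv_inv]
    _ = 1 := hqs
end

section
/- Let n be a positive integer, η > 0 a real number, Π : Matrix (Fin n) (Fin n) ℝ a diagonal matrix with strictly positive diagonal entries, L̂ : Matrix (Fin n) (Fin n) ℝ a symmetric matrix such that η•Π + L̂ is positive definite, and Y : Matrix (Fin n) (Fin n) ℝ arbitrary. Define G(F) = (η/2) * trace((F − Y)ᵀ * Π * (F − Y)) + (1/2) * trace(Fᵀ * L̂ * F). Then F_v = η • (η•Π + L̂)⁻¹ * Π * Y is the unique minimizer of G over all F : Matrix (Fin n) (Fin n) ℝ, i.e., G(F_v) ≤ G(F) for every F, with equality only when F = F_v. -/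
/-! With `A = η • Pmat + L`, twice the objective is `tr (Fᵀ A F) - 2 tr (Fᵀ (η • Pmat Y))` plus a
constant, and `A Fv = η • Pmat Y`. Completing the square gives
`G F = G Fv + ½ tr ((F - Fv)ᵀ A (F - Fv))`, and for positive definite `A` the last trace is
nonnegative and vanishes only at `F = Fv`. -/

open Matrix
open scoped ComplexOrder

namespace Matrix

section CompleteSquare

variable {m k R : Type*} [Fintype m] [Fintype k] [CommRing R]

theorem trace_transpose_mul_mul_comm (A : Matrix m m R) (hA : Aᵀ = A) (F X : Matrix m k R) :
    (Xᵀ * A * F).trace = (Fᵀ * A * X).trace := by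
  rw [← trace_transpose, transpose_mul, transpose_mul, transpose_transpose, hA, Matrix.mul_assoc]

theorem trace_quadratic_complete_square {A : Matrix m m R} (hA : Aᵀ = A) {X₀ B : Matrix m k R}
    (hX₀ : A * X₀ = B) (F : Matrix m k R) :
    (Fᵀ * A * F).trace - 2 * (Fᵀ * B).trace
      = ((F - X₀)ᵀ * A * (F - X₀)).trace - (X₀ᵀ * A * X₀).trace := by
  have hcross := trace_transpose_mul_mul_comm A hA F X₀
  rw [← hX₀, ← Matrix.mul_assoc]
  simp only [transpose_sub, Matrix.sub_mul, Matrix.mul_sub, trace_sub]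
  linear_combination hcross

end CompleteSquare

section PosDef

variable {m k 𝕜 : Type*} [Fintype m] [Fintype k] [RCLike 𝕜]

theorem PosDef.conjTranspose_mul_mul_same_eq_zero_iff {A : Matrix m m 𝕜} (hA : A.PosDef)
    {B : Matrix m k 𝕜} : Bᴴ * A * B = 0 ↔ B = 0 := by
  refine ⟨fun h ↦ ?_, fun h ↦ by simp [h]⟩
  classical
  refine ext_of_mulVec_single fun j ↦ ?_
  rw [zero_mulVec]
  by_contra hBj
  have hpos := hA.dotProduct_mulVec_pos hBj
  simp only [star_mulVec, dotProduct_mulVec, vecMul_vecMul] at hpos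
  simp [h] at hpos

theorem PosDef.trace_conjTranspose_mul_mul_same_eq_zero_iff {A : Matrix m m 𝕜} (hA : A.PosDef)
    {B : Matrix m k 𝕜} : (Bᴴ * A * B).trace = 0 ↔ B = 0 := by
  rw [(hA.posSemidef.conjTranspose_mul_mul_same B).trace_eq_zero_iff,
    hA.conjTranspose_mul_mul_same_eq_zero_iff]

end PosDef

section Minimizer

variable {m k : Type*} [Fintype m] [Fintype k] {A : Matrix m m ℝ} {X₀ B : Matrix m k ℝ}

theorem PosDef.trace_quadratic_le (hA : A.PosDef) (hX₀ : A * X₀ = B) (F : Matrix m k ℝ) :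
    (X₀ᵀ * A * X₀).trace - 2 * (X₀ᵀ * B).trace ≤ (Fᵀ * A * F).trace - 2 * (Fᵀ * B).trace := by
  have hAT : Aᵀ = A := hA.isHermitian
  have hnonneg := (hA.posSemidef.conjTranspose_mul_mul_same (F - X₀)).trace_nonneg
  rw [conjTranspose_eq_transpose_of_trivial] at hnonneg
  rw [trace_quadratic_complete_square hAT hX₀, trace_quadratic_complete_square hAT hX₀, sub_self,
    transpose_zero, Matrix.zero_mul, Matrix.mul_zero, trace_zero]
  linarith

theorem PosDef.eq_of_trace_quadratic_eq (hA : A.PosDef) (hX₀ : A * X₀ = B) {F : Matrix m k ℝ}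
    (hF : (Fᵀ * A * F).trace - 2 * (Fᵀ * B).trace
      = (X₀ᵀ * A * X₀).trace - 2 * (X₀ᵀ * B).trace) : F = X₀ := by
  have hAT : Aᵀ = A := hA.isHermitian
  rw [trace_quadratic_complete_square hAT hX₀, trace_quadratic_complete_square hAT hX₀, sub_self,
    transpose_zero, Matrix.zero_mul, Matrix.mul_zero, trace_zero, sub_left_inj,
    ← conjTranspose_eq_transpose_of_trivial, hA.trace_conjTranspose_mul_mul_same_eq_zero_iff] at hF
  exact sub_eq_zero.mp hF

end Minimizer

theorem trace_residual_add_trace_eq_quadratic {m k R : Type*} [Fintype m] [Fintype k]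
    [CommRing R] {P : Matrix m m R} (hP : Pᵀ = P) (η : R) (L : Matrix m m R) (Y F : Matrix m k R) :
    η * ((F - Y)ᵀ * P * (F - Y)).trace + (Fᵀ * L * F).trace
      = (Fᵀ * (η • P + L) * F).trace - 2 * (Fᵀ * (η • (P * Y))).trace
        + η * (Yᵀ * P * Y).trace := by
  have hcross := trace_transpose_mul_mul_comm P hP F Y
  simp only [transpose_sub, Matrix.sub_mul, Matrix.mul_sub, Matrix.add_mul, Matrix.mul_add,
    Matrix.smul_mul, Matrix.mul_smul, trace_sub, trace_add, trace_smul, smul_eq_mul,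
    ← Matrix.mul_assoc]
  linear_combination (-η) * hcross

end Matrix

theorem mmcp_vertical_propagation_unique_minimizer_general
    (n : ℕ) (η : ℝ)
    (Pmat : Matrix (Fin n) (Fin n) ℝ)
    (hPmatdiag : Pmat.IsDiag)
    (L : Matrix (Fin n) (Fin n) ℝ)
    (hposdef : (η • Pmat + L).PosDef)
    (Y : Matrix (Fin n) (Fin n) ℝ)
    (G : Matrix (Fin n) (Fin n) ℝ → ℝ)
    (hG : ∀ F, G F = (η / 2) * ((F - Y)ᵀ * Pmat * (F - Y)).trace
        + (1 / 2) * (Fᵀ * L * F).trace)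
    (Fv : Matrix (Fin n) (Fin n) ℝ)
    (hFv : Fv = η • ((η • Pmat + L)⁻¹ * Pmat * Y)) :
    (∀ F, G Fv ≤ G F) ∧ (∀ F, G F = G Fv → F = Fv) := by
  have hAFv : (η • Pmat + L) * Fv = η • (Pmat * Y) := by
    rw [hFv, Matrix.mul_smul, Matrix.mul_assoc, mul_nonsing_inv_cancel_left _ _
      ((isUnit_iff_isUnit_det _).mp hposdef.isUnit)]
  have hG_quadratic : ∀ F, 2 * G F = (Fᵀ * (η • Pmat + L) * F).trace
      - 2 * (Fᵀ * (η • (Pmat * Y))).trace + η * (Yᵀ * Pmat * Y).trace := fun F ↦ by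
    rw [← trace_residual_add_trace_eq_quadratic hPmatdiag.isSymm, hG]
    ring
  refine ⟨fun F ↦ ?_, fun F hF ↦ hposdef.eq_of_trace_quadratic_eq hAFv ?_⟩
  · linarith [hG_quadratic F, hG_quadratic Fv, hposdef.trace_quadratic_le hAFv F]
  · linarith [hG_quadratic F, hG_quadratic Fv]

/-- For `η > 0`, `Pmat` diagonal with positive diagonal, `L̂`
symmetric with `η•Pmat + L̂` positive definite, and any `Y`, the matrix
`F_v = η • (η•Pmat + L̂)⁻¹ * Pmat * Y` is the unique minimizer of
`G(F) = (η/2) * trace((F − Y)ᵀ * Pmat * (F − Y)) + (1/2) * trace(Fᵀ * L̂ * F)`. -/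
theorem mmcp_vertical_propagation_unique_minimizer
    (n : ℕ) (hn : 0 < n) (η : ℝ) (hη : 0 < η)
    (Pmat : Matrix (Fin n) (Fin n) ℝ)
    (hPmatdiag : Pmat.IsDiag) (hPmatpos : ∀ i, 0 < Pmat i i)
    (L : Matrix (Fin n) (Fin n) ℝ) (hLsymm : L.IsSymm)
    (hposdef : (η • Pmat + L).PosDef)
    (Y : Matrix (Fin n) (Fin n) ℝ)
    (G : Matrix (Fin n) (Fin n) ℝ → ℝ)
    (hG : ∀ F, G F = (η / 2) * ((F - Y)ᵀ * Pmat * (F - Y)).trace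
        + (1 / 2) * (Fᵀ * L * F).trace)
    (Fv : Matrix (Fin n) (Fin n) ℝ)
    (hFv : Fv = η • ((η • Pmat + L)⁻¹ * Pmat * Y)) :
    (∀ F, G Fv ≤ G F) ∧ (∀ F, G F = G Fv → F = Fv) :=
  mmcp_vertical_propagation_unique_minimizer_general n η Pmat hPmatdiag L hposdef Y G hG Fv hFv
end

section
/- Let n be a positive integer, η > 0 and α > 0 real numbers, Π : Matrix (Fin n) (Fin n) ℝ a diagonal matrix with strictly positive diagonal entries, L : Matrix (Fin n) (Fin n) ℝ a symmetric matrix such that L + (α*η)•Π is positive definite, and Y_+, Y_- : Matrix (Fin n) (Fin n) ℝ arbitrary. Define H(F) = (α*η/2) * trace((F − Y_+)ᵀ * Π * (F − Y_+)) + (η/2) * trace((F − Y_-)ᵀ * Π * (F − Y_-)) + (1/2) * trace(Fᵀ * (L − η•Π) * F). Then F_v = η • (L + (α*η)•Π)⁻¹ * Π * (α•Y_+ + Y_-) is the unique minimizer of H over all F : Matrix (Fin n) (Fin n) ℝ. -/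
/-!
Put `A = L + αηΠ`, which is symmetric because it is positive definite, and `G = ηΠ(αY₊ + Y₋)`.
Since `Π` is symmetric, `2 H(F) = tr(Fᵀ A F) - 2 tr(Fᵀ G) + c` with `c` independent of `F`, and
`A F_v = G`. Completing the square gives `H(F) = H(F_v) + ½ tr((F - F_v)ᵀ A (F - F_v))`, and that
trace is the sum of the values of the quadratic form of `A` on the columns of `F - F_v`, hence
positive unless `F = F_v`.
-/

open Matrix

namespace Matrix

variable {n m R : Type*} [Fintype n]

theorem IsSymm.trace_transpose_mul_mul_comm [CommSemiring R] [Fintype m] {B : Matrix n n R}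
    (hB : B.IsSymm) (X Y : Matrix n m R) : (Xᵀ * B * Y).trace = (Yᵀ * B * X).trace := by
  rw [← trace_transpose, transpose_mul, transpose_mul, transpose_transpose, hB.eq, Matrix.mul_assoc]

theorem IsSymm.trace_transpose_sub_mul_mul_sub [CommRing R] [Fintype m] {B : Matrix n n R}
    (hB : B.IsSymm) (X Y : Matrix n m R) :
    ((X - Y)ᵀ * B * (X - Y)).trace
      = (Xᵀ * B * X).trace - 2 * (Xᵀ * B * Y).trace + (Yᵀ * B * Y).trace := by
  simp only [transpose_sub, Matrix.sub_mul, Matrix.mul_sub, trace_sub]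
  rw [hB.trace_transpose_mul_mul_comm Y X]
  ring

/-- Completing the square for the trace form `X ↦ tr (Xᵀ B X)`. -/
theorem IsSymm.trace_quadratic_eq_of_mul_eq [CommRing R] [Fintype m] {B : Matrix n n R}
    (hB : B.IsSymm) {G X₀ : Matrix n m R} (hX₀ : B * X₀ = G) (X : Matrix n m R) :
    (Xᵀ * B * X).trace - 2 * (Xᵀ * G).trace
      = (X₀ᵀ * B * X₀).trace - 2 * (X₀ᵀ * G).trace + ((X - X₀)ᵀ * B * (X - X₀)).trace := by
  rw [hB.trace_transpose_sub_mul_mul_sub, ← hX₀]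
  simp only [Matrix.mul_assoc]
  ring

theorem diag_transpose_mul_mul [CommSemiring R] (A : Matrix n n R) (M : Matrix n m R) (j : m) :
    (Mᵀ * A * M) j j = Mᵀ j ⬝ᵥ A *ᵥ Mᵀ j := by
  simp only [Matrix.mul_assoc]
  simp [mul_apply, dotProduct, mulVec]

theorem PosDef.trace_transpose_mul_mul_pos [Fintype m] {A : Matrix n n ℝ} (hA : A.PosDef)
    {M : Matrix n m ℝ} (hM : M ≠ 0) : 0 < (Mᵀ * A * M).trace := by
  obtain ⟨j, hj⟩ : ∃ j, Mᵀ j ≠ 0 := by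
    by_contra! h
    exact hM (transpose_eq_zero.mp (funext h))
  refine Finset.sum_pos' (fun j _ => ?_) ⟨j, Finset.mem_univ j, ?_⟩
  · simpa [diag_transpose_mul_mul] using hA.posSemidef.dotProduct_mulVec_nonneg (Mᵀ j)
  · simpa [diag_transpose_mul_mul] using hA.dotProduct_mulVec_pos hj

end Matrix

theorem two_mul_vertical_objective_eq {n m : Type*} [Fintype n] [Fintype m]
    {P : Matrix n n ℝ} (hP : P.IsSymm) (L : Matrix n n ℝ) (Yp Ym F : Matrix n m ℝ) (η α : ℝ) :
    2 * ((α * η / 2) * ((F - Yp)ᵀ * P * (F - Yp)).trace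
        + (η / 2) * ((F - Ym)ᵀ * P * (F - Ym)).trace
        + (1 / 2) * (Fᵀ * (L - η • P) * F).trace)
      = (Fᵀ * (L + (α * η) • P) * F).trace - 2 * (Fᵀ * (η • (P * (α • Yp + Ym)))).trace
        + (α * η * (Ypᵀ * P * Yp).trace + η * (Ymᵀ * P * Ym).trace) := by
  rw [hP.trace_transpose_sub_mul_mul_sub, hP.trace_transpose_sub_mul_mul_sub]
  simp only [Matrix.mul_add, Matrix.add_mul, Matrix.mul_sub, Matrix.sub_mul, Matrix.mul_smul,
    Matrix.smul_mul, trace_add, trace_sub, trace_smul, smul_eq_mul, Matrix.mul_assoc]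
  ring

theorem cpcp_balanced_vertical_propagation_unique_minimizer_general
    (n : ℕ) (η α : ℝ)
    (Pmat : Matrix (Fin n) (Fin n) ℝ)
    (hPmatdiag : Pmat.IsDiag)
    (L : Matrix (Fin n) (Fin n) ℝ)
    (hposdef : (L + (α * η) • Pmat).PosDef)
    (Yp Ym : Matrix (Fin n) (Fin n) ℝ)
    (H : Matrix (Fin n) (Fin n) ℝ → ℝ)
    (hH : ∀ F, H F = (α * η / 2) * ((F - Yp)ᵀ * Pmat * (F - Yp)).trace
        + (η / 2) * ((F - Ym)ᵀ * Pmat * (F - Ym)).trace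
        + (1 / 2) * (Fᵀ * (L - η • Pmat) * F).trace)
    (Fv : Matrix (Fin n) (Fin n) ℝ)
    (hFv : Fv = η • ((L + (α * η) • Pmat)⁻¹ * Pmat * (α • Yp + Ym))) :
    (∀ F, H Fv ≤ H F) ∧ (∀ F, H F = H Fv → F = Fv) := by
  set A := L + (α * η) • Pmat
  have hA : A.IsSymm := isHermitian_iff_isSymm.mp hposdef.isHermitian
  have hAFv : A * Fv = η • (Pmat * (α • Yp + Ym)) := by
    rw [hFv, Matrix.mul_smul, Matrix.mul_assoc, mul_nonsing_inv_cancel_left _ _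
      ((isUnit_iff_isUnit_det A).mp hposdef.isUnit)]
  have hH_sub : ∀ F, H F = H Fv + (1 / 2) * ((F - Fv)ᵀ * A * (F - Fv)).trace := by
    intro F
    have hsq := hA.trace_quadratic_eq_of_mul_eq hAFv F
    have hobjF := two_mul_vertical_objective_eq hPmatdiag.isSymm L Yp Ym F η α
    have hobjFv := two_mul_vertical_objective_eq hPmatdiag.isSymm L Yp Ym Fv η α
    rw [hH, hH]
    linarith
  refine ⟨fun F => ?_, fun F hF => ?_⟩
  · rcases eq_or_ne F Fv with rfl | hne
    · exact le_rfl
    · have := hposdef.trace_transpose_mul_mul_pos (sub_ne_zero.mpr hne)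
      rw [hH_sub F]
      linarith
  · by_contra hne
    have := hposdef.trace_transpose_mul_mul_pos (sub_ne_zero.mpr hne)
    rw [hH_sub F] at hF
    linarith

/-- For `η > 0`, `α > 0`, `Pmat` diagonal with positive diagonal,
`L` symmetric with `L + (α*η)•Pmat` positive definite, and arbitrary `Y₊`, `Y₋`,
the matrix `F_v = η • (L + (α*η)•Pmat)⁻¹ * Pmat * (α•Y₊ + Y₋)` is the unique
minimizer of
`H(F) = (α*η/2) trace((F−Y₊)ᵀ Pmat (F−Y₊)) + (η/2) trace((F−Y₋)ᵀ Pmat (F−Y₋))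
        + (1/2) trace(Fᵀ (L − η•Pmat) F)`. -/
theorem cpcp_balanced_vertical_propagation_unique_minimizer
    (n : ℕ) (hn : 0 < n) (η α : ℝ) (hη : 0 < η) (hα : 0 < α)
    (Pmat : Matrix (Fin n) (Fin n) ℝ)
    (hPmatdiag : Pmat.IsDiag) (hPmatpos : ∀ i, 0 < Pmat i i)
    (L : Matrix (Fin n) (Fin n) ℝ) (hLsymm : L.IsSymm)
    (hposdef : (L + (α * η) • Pmat).PosDef)
    (Yp Ym : Matrix (Fin n) (Fin n) ℝ)
    (H : Matrix (Fin n) (Fin n) ℝ → ℝ)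
    (hH : ∀ F, H F = (α * η / 2) * ((F - Yp)ᵀ * Pmat * (F - Yp)).trace
        + (η / 2) * ((F - Ym)ᵀ * Pmat * (F - Ym)).trace
        + (1 / 2) * (Fᵀ * (L - η • Pmat) * F).trace)
    (Fv : Matrix (Fin n) (Fin n) ℝ)
    (hFv : Fv = η • ((L + (α * η) • Pmat)⁻¹ * Pmat * (α • Yp + Ym))) :
    (∀ F, H Fv ≤ H F) ∧ (∀ F, H F = H Fv → F = Fv) :=
  cpcp_balanced_vertical_propagation_unique_minimizer_general n η α Pmat hPmatdiag L hposdef Yp Ym H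
    hH Fv hFv
end

section
/- Let n be a positive integer, η > 0 a real number, Π : Matrix (Fin n) (Fin n) ℝ a diagonal matrix with strictly positive diagonal entries, L̂ : Matrix (Fin n) (Fin n) ℝ a symmetric matrix such that η•Π + L̂ is positive definite, Y : Matrix (Fin n) (Fin n) ℝ arbitrary, and F_v = η • (η•Π + L̂)⁻¹ * Π * Y. Define the horizontal objective G_h(F) = (η/2) * trace((F − F_v) * Π * (F − F_v)ᵀ) + (1/2) * trace(F * L̂ * Fᵀ). Then the matrix F = η² • (η•Π + L̂)⁻¹ * Π * Y * Π * (η•Π + L̂)⁻¹ is the unique minimizer of G_h, i.e., the combined result of vertical followed by horizontal constraint propagation. -/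
/-!
Expanding `G_h` around `F⋆` with `P` and `L` symmetric gives
`G_h (F⋆ + E) = G_h F⋆ + tr (E (η P (F⋆ - F_v)ᵀ + L F⋆ᵀ)) + ½ tr (E (η P + L) Eᵀ)`.
The linear term vanishes because `F⋆ = η F_v P (η P + L)⁻¹` solves the stationarity equation
`(η P + L) F⋆ᵀ = η P F_vᵀ`, and the quadratic term is positive for `E ≠ 0` because `η P + L` is
positive definite.
-/

open Matrix

namespace Matrix

variable {m n R : Type*} [Fintype n]

theorem IsSymm.trace_mul_mul_transpose_comm [Fintype m] [CommSemiring R] {M : Matrix n n R}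
    (hM : M.IsSymm) (X Z : Matrix m n R) : (X * M * Zᵀ).trace = (Z * M * Xᵀ).trace := by
  rw [← trace_transpose, transpose_mul, transpose_mul, transpose_transpose, hM.eq,
    Matrix.mul_assoc]

theorem IsSymm.trace_add_mul_mul_transpose_add [Fintype m] [CommRing R] {M : Matrix n n R}
    (hM : M.IsSymm) (X E : Matrix m n R) :
    ((X + E) * M * (X + E)ᵀ).trace =
      (X * M * Xᵀ).trace + 2 * (E * M * Xᵀ).trace + (E * M * Eᵀ).trace := by
  rw [transpose_add, Matrix.add_mul, Matrix.add_mul, Matrix.mul_add, Matrix.mul_add, trace_add,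
    trace_add, trace_add, hM.trace_mul_mul_transpose_comm X E]
  ring

theorem IsSymm.mul_transpose_mul_mul_inv [CommRing R] [DecidableEq n] {A P : Matrix n n R}
    (hA : A.IsSymm) (hAdet : IsUnit A.det) (hP : P.IsSymm) (F : Matrix m n R) :
    A * (F * P * A⁻¹)ᵀ = P * Fᵀ := by
  rw [transpose_mul, transpose_mul, transpose_nonsing_inv, hA.eq, hP.eq]
  exact mul_nonsing_inv_cancel_left A _ hAdet

theorem PosDef.trace_mul_mul_transpose_pos [Fintype m] {A : Matrix n n ℝ} (hA : A.PosDef)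
    {E : Matrix m n ℝ} (hE : E ≠ 0) : 0 < (E * A * Eᵀ).trace := by
  obtain ⟨i, hi⟩ := Function.ne_iff.mp hE
  have hdiag : ∀ j, (E * A * Eᵀ) j j = E j ⬝ᵥ A *ᵥ E j := fun j => by
    rw [Matrix.mul_assoc]
    simp only [mul_apply, mulVec, dotProduct, transpose_apply, Finset.mul_sum]
  have hterm : ∀ j, 0 ≤ E j ⬝ᵥ A *ᵥ E j := fun j => by
    simpa using hA.posSemidef.dotProduct_mulVec_nonneg (E j)
  simp only [trace, diag_apply, hdiag]
  exact Finset.sum_pos' (fun j _ => hterm j)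
    ⟨i, Finset.mem_univ i, by simpa using hA.dotProduct_mulVec_pos hi⟩

theorem PosDef.lt_of_ne_of_forall_add_eq [Fintype m] {A : Matrix n n ℝ} (hA : A.PosDef)
    {G : Matrix m n ℝ → ℝ} {F₀ : Matrix m n ℝ}
    (hG : ∀ E, G (F₀ + E) = G F₀ + (E * A * Eᵀ).trace / 2) {F : Matrix m n ℝ} (hF : F ≠ F₀) :
    G F₀ < G F := by
  have hpos := hA.trace_mul_mul_transpose_pos (sub_ne_zero.mpr hF)
  have hF_eq := hG (F - F₀)
  rw [add_sub_cancel] at hF_eq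
  linarith

end Matrix

section HorizontalObjective

variable {m n : Type*} [Fintype m] [Fintype n]

noncomputable def horizontalObjective (η : ℝ)
    (P L : Matrix n n ℝ) (Fv F : Matrix m n ℝ) : ℝ :=
  η / 2 * ((F - Fv) * P * (F - Fv)ᵀ).trace + 1 / 2 * (F * L * Fᵀ).trace

theorem horizontalObjective_add {η : ℝ}
    {P L : Matrix n n ℝ} (hP : P.IsSymm) (hL : L.IsSymm) {Fv F₀ : Matrix m n ℝ}
    (hstat : (η • P + L) * F₀ᵀ = η • (P * Fvᵀ)) (E : Matrix m n ℝ) :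
    horizontalObjective η P L Fv (F₀ + E) =
      horizontalObjective η P L Fv F₀ + (E * (η • P + L) * Eᵀ).trace / 2 := by
  have hcross : η * (E * P * (F₀ - Fv)ᵀ).trace + (E * L * F₀ᵀ).trace = 0 := by
    have h := congrArg (fun M => (E * M).trace) hstat
    simp only [Matrix.add_mul, Matrix.mul_add, Matrix.mul_sub, transpose_sub, trace_add,
      trace_sub, Matrix.smul_mul, Matrix.mul_smul, trace_smul, smul_eq_mul,
      Matrix.mul_assoc] at h ⊢
    linear_combination h
  rw [horizontalObjective, horizontalObjective, add_sub_right_comm F₀ E Fv,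
    hP.trace_add_mul_mul_transpose_add, hL.trace_add_mul_mul_transpose_add, Matrix.mul_add,
    Matrix.add_mul, Matrix.mul_smul, Matrix.smul_mul, trace_add, trace_smul, smul_eq_mul]
  linear_combination hcross

end HorizontalObjective

theorem mmcp_horizontal_propagation_unique_minimizer_general
    (n : ℕ) (η : ℝ)
    (Pmat : Matrix (Fin n) (Fin n) ℝ)
    (hPmatdiag : Pmat.IsDiag)
    (L : Matrix (Fin n) (Fin n) ℝ) (hLsymm : L.IsSymm)
    (hposdef : (η • Pmat + L).PosDef)
    (Y : Matrix (Fin n) (Fin n) ℝ)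
    (Fv : Matrix (Fin n) (Fin n) ℝ)
    (hFv : Fv = η • ((η • Pmat + L)⁻¹ * Pmat * Y))
    (Gh : Matrix (Fin n) (Fin n) ℝ → ℝ)
    (hGh : ∀ F, Gh F = (η / 2) * ((F - Fv) * Pmat * (F - Fv)ᵀ).trace
        + (1 / 2) * (F * L * Fᵀ).trace)
    (Fstar : Matrix (Fin n) (Fin n) ℝ)
    (hFstar : Fstar = (η ^ 2) • ((η • Pmat + L)⁻¹ * Pmat * Y * Pmat * (η • Pmat + L)⁻¹)) :
    (∀ F, Gh Fstar ≤ Gh F) ∧ (∀ F, Gh F = Gh Fstar → F = Fstar) := by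
  have hP : Pmat.IsSymm := hPmatdiag.isSymm
  have hFstar_eq : Fstar = η • Fv * Pmat * (η • Pmat + L)⁻¹ := by
    rw [hFstar, hFv]
    simp only [Matrix.smul_mul, smul_smul, Matrix.mul_assoc, sq]
  have hstat : (η • Pmat + L) * Fstarᵀ = η • (Pmat * Fvᵀ) := by
    rw [hFstar_eq, ((hP.smul η).add hLsymm).mul_transpose_mul_mul_inv
      ((isUnit_iff_isUnit_det _).mp hposdef.isUnit) hP, transpose_smul, Matrix.mul_smul]
  obtain rfl : Gh = horizontalObjective η Pmat L Fv := funext hGh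
  have hlt : ∀ F ≠ Fstar,
      horizontalObjective η Pmat L Fv Fstar < horizontalObjective η Pmat L Fv F :=
    fun F => hposdef.lt_of_ne_of_forall_add_eq (horizontalObjective_add hP hLsymm hstat)
  refine ⟨fun F => ?_, fun F hF => ?_⟩
  · rcases eq_or_ne F Fstar with rfl | hne
    exacts [le_rfl, (hlt F hne).le]
  · by_contra hne
    exact (hlt F hne).ne' hF

/-- With `η > 0`, `Pmat` diagonal with positive diagonal, `L̂`
symmetric with `η•Pmat + L̂` positive definite, `Y` arbitrary, and
`F_v = η • (η•Pmat + L̂)⁻¹ * Pmat * Y` the vertical propagation result, the matrix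
`F = η² • (η•Pmat + L̂)⁻¹ * Pmat * Y * Pmat * (η•Pmat + L̂)⁻¹` is the unique minimizer of
the horizontal objective
`G_h(F) = (η/2) trace((F − F_v) Pmat (F − F_v)ᵀ) + (1/2) trace(F L̂ Fᵀ)`. -/
theorem mmcp_horizontal_propagation_unique_minimizer
    (n : ℕ) (hn : 0 < n) (η : ℝ) (hη : 0 < η)
    (Pmat : Matrix (Fin n) (Fin n) ℝ)
    (hPmatdiag : Pmat.IsDiag) (hPmatpos : ∀ i, 0 < Pmat i i)
    (L : Matrix (Fin n) (Fin n) ℝ) (hLsymm : L.IsSymm)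
    (hposdef : (η • Pmat + L).PosDef)
    (Y : Matrix (Fin n) (Fin n) ℝ)
    (Fv : Matrix (Fin n) (Fin n) ℝ)
    (hFv : Fv = η • ((η • Pmat + L)⁻¹ * Pmat * Y))
    (Gh : Matrix (Fin n) (Fin n) ℝ → ℝ)
    (hGh : ∀ F, Gh F = (η / 2) * ((F - Fv) * Pmat * (F - Fv)ᵀ).trace
        + (1 / 2) * (F * L * Fᵀ).trace)
    (Fstar : Matrix (Fin n) (Fin n) ℝ)
    (hFstar : Fstar = (η ^ 2) • ((η • Pmat + L)⁻¹ * Pmat * Y * Pmat * (η • Pmat + L)⁻¹)) :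
    (∀ F, Gh Fstar ≤ Gh F) ∧ (∀ F, Gh F = Gh Fstar → F = Fstar) :=
  mmcp_horizontal_propagation_unique_minimizer_general n η Pmat hPmatdiag L hLsymm hposdef Y Fv hFv
    Gh hGh Fstar hFstar
end
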